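/- arXiv:2303.12461 — 4 statements merged into one kernel-verified Lean document; each statement's English description precedes it below -/
import Mathlib

section
/- The set Ṽ = {v = (v₁, v₂, v₃) ∈ ℝ³ : v₁² + v₂² + (v₃ + g)² ≤ T_max², v₁² + v₂² ≤ (v₃ + g)²·(tan ε_max)², and v₃ ≥ −g} is a convex subset of ℝ³. -/
private lemma cross2 (x0 x1 y0 y1 P Q t : ℝ) (hP : 0 ≤ P) (hQ : 0 ≤ Q)
    (ht : 0 ≤ t) (hx : x0^2 + x1^2 ≤ P^2 * t) (hy : y0^2 + y1^2 ≤ Q^2 * t) :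
    x0*y0 + x1*y1 ≤ P*Q*t := by
  have h1 : (x0*y0 + x1*y1)^2 ≤ (P*Q*t)^2 := by
    nlinarith [sq_nonneg (x0*y1 - x1*y0), sq_nonneg x0, sq_nonneg x1, sq_nonneg y0,
      sq_nonneg y1, mul_nonneg (mul_nonneg (mul_nonneg hP hP) ht) (sq_nonneg y0),
      mul_le_mul hx hy (by positivity) (by positivity)]
  have hr : 0 ≤ P*Q*t := by positivity
  nlinarith [h1, hr]

private lemma cross3 (x0 x1 x2 y0 y1 y2 T : ℝ) (hT : 0 ≤ T)
    (hx : x0^2 + x1^2 + x2^2 ≤ T^2) (hy : y0^2 + y1^2 + y2^2 ≤ T^2) :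
    x0*y0 + x1*y1 + x2*y2 ≤ T^2 := by
  have h1 : (x0*y0 + x1*y1 + x2*y2)^2 ≤ (T^2)^2 := by
    nlinarith [sq_nonneg (x0*y1 - x1*y0), sq_nonneg (x0*y2 - x2*y0),
      sq_nonneg (x1*y2 - x2*y1),
      mul_le_mul hx hy (by positivity) (by positivity)]
  nlinarith [h1, sq_nonneg T]

/-- Proposition 1 (convexity part): the inner-approximating input constraint set
`Ṽ = {v ∈ ℝ³ : v₁² + v₂² + (v₃+g)² ≤ T_max², v₁² + v₂² ≤ (v₃+g)²·tan²ε_max, v₃ ≥ -g}`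
is convex. -/
theorem tildeV_convex (g Tmax εmax : ℝ) (hg : 0 < g) (hT : 0 < Tmax)
    (hε : εmax ∈ Set.Ioo 0 (Real.pi / 2)) :
    Convex ℝ {v : Fin 3 → ℝ |
      (v 0) ^ 2 + (v 1) ^ 2 + (v 2 + g) ^ 2 ≤ Tmax ^ 2 ∧
      (v 0) ^ 2 + (v 1) ^ 2 ≤ (v 2 + g) ^ 2 * (Real.tan εmax) ^ 2 ∧
      v 2 ≥ -g} := by
  intro x hx y hy a b ha hb hab
  obtain ⟨hx1, hx2, hx3⟩ := hx
  obtain ⟨hy1, hy2, hy3⟩ := hy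
  have hPx : (0:ℝ) ≤ x 2 + g := by linarith
  have hPy : (0:ℝ) ≤ y 2 + g := by linarith
  have ht2 : (0:ℝ) ≤ (Real.tan εmax)^2 := sq_nonneg _
  have hc3 := cross3 (x 0) (x 1) (x 2 + g) (y 0) (y 1) (y 2 + g) Tmax hT.le
    (by linarith) (by linarith)
  have hc2 := cross2 (x 0) (x 1) (y 0) (y 1) (x 2 + g) (y 2 + g)
    ((Real.tan εmax)^2) hPx hPy ht2 (by linarith) (by linarith)
  have e : a * x 2 + b * y 2 + g = a * (x 2 + g) + b * (y 2 + g) := by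
    linear_combination (-g) * hab
  have h1 := mul_le_mul_of_nonneg_left hx1 (mul_nonneg ha ha)
  have h2 := mul_le_mul_of_nonneg_left hy1 (mul_nonneg hb hb)
  have h3 := mul_le_mul_of_nonneg_left hc3 (mul_nonneg ha hb)
  have h1' := mul_le_mul_of_nonneg_left hx2 (mul_nonneg ha ha)
  have h2' := mul_le_mul_of_nonneg_left hy2 (mul_nonneg hb hb)
  have h3' := mul_le_mul_of_nonneg_left hc2 (mul_nonneg ha hb)
  have hTsum : a^2 * Tmax^2 + 2*(a*b*Tmax^2) + b^2 * Tmax^2 = Tmax^2 := by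
    linear_combination (a + b + 1) * Tmax^2 * hab
  refine ⟨?_, ?_, ?_⟩ <;> simp only [Pi.add_apply, Pi.smul_apply, smul_eq_mul]
  · rw [e]; linarith [h1, h2, h3, hTsum]
  · rw [e]; linarith [h1', h2', h3']
  · nlinarith [mul_nonneg ha (by linarith : (0:ℝ) ≤ x 2 + g),
      mul_nonneg hb (by linarith : (0:ℝ) ≤ y 2 + g)]
end

section
/- For every yaw angle ψ ∈ ℝ and every v = (v₁, v₂, v₃) ∈ ℝ³ with v₃ + g > 0, the composition h_ψ(φ_ψ(v)) = v. In particular, under the input transformation u = φ_ψ(v), the quadcopter translational dynamics (ẍ, ÿ, z̈) = h_ψ(u) become the linear triple integrator-chain σ̈ = v. -/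
/-! With `a = v₁ cos ψ + v₂ sin ψ`, `b = v₁ sin ψ − v₂ cos ψ` (the horizontal part of `v` rotated
by `−ψ`) and `c = v₃ + g > 0`, rotation invariance gives `T² = a² + b² + c²`. Then `φ` and `θ` are
spherical angles of `(a, b, c)`: `T sin φ = b`, `T cos φ = √(a² + c²)`, `T cos φ sin θ = a` and
`T cos φ cos θ = c`; rotating `(a, b)` back by `ψ` returns `(v₁, v₂)`. -/

namespace Real

theorem mul_sin_arcsin_div {b T : ℝ} (hT : 0 < T) (hb : |b| ≤ T) :
    T * sin (arcsin (b / T)) = b := by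
  have hbT : |b / T| ≤ 1 := by rwa [abs_div, abs_of_pos hT, div_le_one hT]
  rw [sin_arcsin (abs_le.mp hbT).1 (abs_le.mp hbT).2]
  field_simp

theorem mul_cos_arcsin_div {b T : ℝ} (hT : 0 < T) :
    T * cos (arcsin (b / T)) = √(T ^ 2 - b ^ 2) := by
  have h : 1 - (b / T) ^ 2 = (T ^ 2 - b ^ 2) / T ^ 2 := by field_simp
  rw [cos_arcsin, h, sqrt_div' _ (sq_nonneg T), sqrt_sq hT.le]
  field_simp

theorem sqrt_one_add_div_sq {a c : ℝ} (hc : 0 < c) :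
    √(1 + (a / c) ^ 2) = √(a ^ 2 + c ^ 2) / c := by
  have h : 1 + (a / c) ^ 2 = (a ^ 2 + c ^ 2) / c ^ 2 := by field_simp; ring
  rw [h, sqrt_div' _ (sq_nonneg c), sqrt_sq hc.le]

theorem sqrt_sq_add_sq_mul_sin_arctan_div (a : ℝ) {c : ℝ} (hc : 0 < c) :
    √(a ^ 2 + c ^ 2) * sin (arctan (a / c)) = a := by
  have hs : 0 < √(a ^ 2 + c ^ 2) := sqrt_pos.mpr (by positivity)
  rw [sin_arctan, sqrt_one_add_div_sq hc]
  field_simp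

theorem sqrt_sq_add_sq_mul_cos_arctan_div (a : ℝ) {c : ℝ} (hc : 0 < c) :
    √(a ^ 2 + c ^ 2) * cos (arctan (a / c)) = c := by
  have hs : 0 < √(a ^ 2 + c ^ 2) := sqrt_pos.mpr (by positivity)
  rw [cos_arctan, sqrt_one_add_div_sq hc]
  field_simp

theorem spherical_coords_arcsin_arctan {a b c T : ℝ} (hc : 0 < c) (hT : 0 ≤ T)
    (hT2 : T ^ 2 = a ^ 2 + b ^ 2 + c ^ 2) :
    T * sin (arcsin (b / T)) = b ∧
    T * cos (arcsin (b / T)) * sin (arctan (a / c)) = a ∧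
    T * cos (arcsin (b / T)) * cos (arctan (a / c)) = c := by
  have hT0 : 0 < T := by nlinarith
  have hb : |b| ≤ T := abs_le_of_sq_le_sq (by nlinarith) hT
  have hTcos : T * cos (arcsin (b / T)) = √(a ^ 2 + c ^ 2) := by
    rw [mul_cos_arcsin_div hT0, hT2]
    ring_nf
  rw [hTcos]
  exact ⟨mul_sin_arcsin_div hT0 hb, sqrt_sq_add_sq_mul_sin_arctan_div a hc,
    sqrt_sq_add_sq_mul_cos_arctan_div a hc⟩

end Real

theorem h_comp_phi_general (g ψ v1 v2 v3 : ℝ) (hv : v3 + g > 0) :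
    let T := Real.sqrt (v1 ^ 2 + v2 ^ 2 + (v3 + g) ^ 2)
    let φ := Real.arcsin ((v1 * Real.sin ψ - v2 * Real.cos ψ) / T)
    let θ := Real.arctan ((v1 * Real.cos ψ + v2 * Real.sin ψ) / (v3 + g))
    T * (Real.cos φ * Real.sin θ * Real.cos ψ + Real.sin φ * Real.sin ψ) = v1 ∧
    T * (Real.cos φ * Real.sin θ * Real.sin ψ - Real.sin φ * Real.cos ψ) = v2 ∧
    T * (Real.cos φ * Real.cos θ) - g = v3 := by
  intro T φ θ
  have hpyth := Real.sin_sq_add_cos_sq ψ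
  have hT2 : T ^ 2 = (v1 * Real.cos ψ + v2 * Real.sin ψ) ^ 2
      + (v1 * Real.sin ψ - v2 * Real.cos ψ) ^ 2 + (v3 + g) ^ 2 := by
    rw [Real.sq_sqrt (by positivity)]
    linear_combination (-(v1 ^ 2) - v2 ^ 2) * hpyth
  obtain ⟨hb, ha, hc⟩ := Real.spherical_coords_arcsin_arctan hv (Real.sqrt_nonneg _) hT2
  refine ⟨?_, ?_, ?_⟩
  · linear_combination Real.cos ψ * ha + Real.sin ψ * hb + v1 * hpyth
  · linear_combination Real.sin ψ * ha - Real.cos ψ * hb + v2 * hpyth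
  · linear_combination hc

/-- Exact feedback linearization: `h_ψ (φ_ψ v) = v` for every `v` with `v₃ + g > 0`,
so under the input transformation `u = φ_ψ(v)` the translational dynamics
`(ẍ, ÿ, z̈) = h_ψ(u)` become the triple integrator chain `σ̈ = v`. -/
theorem h_comp_phi (g ψ v1 v2 v3 : ℝ) (hg : 0 < g) (hv : v3 + g > 0) :
    let T := Real.sqrt (v1 ^ 2 + v2 ^ 2 + (v3 + g) ^ 2)
    let φ := Real.arcsin ((v1 * Real.sin ψ - v2 * Real.cos ψ) / T)
    let θ := Real.arctan ((v1 * Real.cos ψ + v2 * Real.sin ψ) / (v3 + g))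
    T * (Real.cos φ * Real.sin θ * Real.cos ψ + Real.sin φ * Real.sin ψ) = v1 ∧
    T * (Real.cos φ * Real.sin θ * Real.sin ψ - Real.sin φ * Real.cos ψ) = v2 ∧
    T * (Real.cos φ * Real.cos θ) - g = v3 :=
  h_comp_phi_general g ψ v1 v2 v3 hv
end

section
/- For every yaw angle ψ ∈ ℝ and every u = (T, φ, θ) ∈ ℝ³ with T > 0, |φ| < π/2, and |θ| < π/2, the composition φ_ψ(h_ψ(u)) = u; that is, T = √(a₁² + a₂² + (a₃ + g)²), φ = arcsin((a₁ sin ψ − a₂ cos ψ)/T), and θ = arctan((a₁ cos ψ + a₂ sin ψ)/(a₃ + g)), where (a₁, a₂, a₃) = h_ψ(T, φ, θ). -/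
/-- Flat representation (3b)–(3d): `φ_ψ (h_ψ u) = u` for every `u = (T, φ, θ)` with
`T > 0`, `|φ| < π/2`, `|θ| < π/2`; thrust, roll and pitch are recovered algebraically
from the translational accelerations `(a₁, a₂, a₃) = h_ψ(T, φ, θ)`. -/
theorem phi_comp_h (g ψ T φ θ : ℝ) (hg : 0 < g) (hT : 0 < T)
    (hφ : |φ| < Real.pi / 2) (hθ : |θ| < Real.pi / 2) :
    let a1 := T * (Real.cos φ * Real.sin θ * Real.cos ψ + Real.sin φ * Real.sin ψ)
    let a2 := T * (Real.cos φ * Real.sin θ * Real.sin ψ - Real.sin φ * Real.cos ψ)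
    let a3 := T * (Real.cos φ * Real.cos θ) - g
    T = Real.sqrt (a1 ^ 2 + a2 ^ 2 + (a3 + g) ^ 2) ∧
    φ = Real.arcsin ((a1 * Real.sin ψ - a2 * Real.cos ψ) /
          Real.sqrt (a1 ^ 2 + a2 ^ 2 + (a3 + g) ^ 2)) ∧
    θ = Real.arctan ((a1 * Real.cos ψ + a2 * Real.sin ψ) / (a3 + g)) := by
  intro a1 a2 a3
  obtain ⟨hφ1, hφ2⟩ := abs_lt.mp hφ
  obtain ⟨hθ1, hθ2⟩ := abs_lt.mp hθ
  have hsum : a1 ^ 2 + a2 ^ 2 + (a3 + g) ^ 2 = T ^ 2 := by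
    simp only [a1, a2, a3]
    have h1 := Real.sin_sq_add_cos_sq ψ
    have h2 := Real.sin_sq_add_cos_sq φ
    have h3 := Real.sin_sq_add_cos_sq θ
    linear_combination (T^2*(Real.cos φ^2*Real.sin θ^2 + Real.sin φ^2))*h1 +
      T^2*Real.cos φ^2*h3 + T^2*h2
  have hsqrt : Real.sqrt (a1 ^ 2 + a2 ^ 2 + (a3 + g) ^ 2) = T := by
    rw [hsum, Real.sqrt_sq hT.le]
  refine ⟨hsqrt.symm, ?_, ?_⟩
  · have hnum : a1 * Real.sin ψ - a2 * Real.cos ψ = T * Real.sin φ := by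
      simp only [a1, a2]
      have h1 := Real.sin_sq_add_cos_sq ψ
      linear_combination (T*Real.sin φ)*h1
    rw [hsqrt, hnum, mul_comm, mul_div_assoc, div_self hT.ne', mul_one,
      Real.arcsin_sin hφ1.le hφ2.le]
  · have hnum : a1 * Real.cos ψ + a2 * Real.sin ψ = T * (Real.cos φ * Real.sin θ) := by
      simp only [a1, a2]
      have h1 := Real.sin_sq_add_cos_sq ψ
      linear_combination (T*(Real.cos φ*Real.sin θ))*h1
    have hden : a3 + g = T * (Real.cos φ * Real.cos θ) := by simp only [a3]; ring
    have hcφ : 0 < Real.cos φ := Real.cos_pos_of_mem_Ioo ⟨hφ1, hφ2⟩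
    have hcθ : 0 < Real.cos θ := Real.cos_pos_of_mem_Ioo ⟨hθ1, hθ2⟩
    rw [hnum, hden]
    have : T * (Real.cos φ * Real.sin θ) / (T * (Real.cos φ * Real.cos θ))
        = Real.tan θ := by
      rw [Real.tan_eq_sin_div_cos]
      field_simp
    rw [this, Real.arctan_tan hθ1 hθ2]
end

section
/- For every yaw angle ψ ∈ ℝ, the map h_ψ restricted to the set D = {(T, φ, θ) ∈ ℝ³ : T > 0, |φ| < π/2, |θ| < π/2} is a bijection from D onto the set {v ∈ ℝ³ : v₃ + g > 0}, with inverse given by φ_ψ. -/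
set_option maxHeartbeats 1000000


/-- `h_ψ` restricted to `D = {(T, φ, θ) : T > 0, |φ| < π/2, |θ| < π/2}` is a bijection
onto `{v : v₃ + g > 0}`, with inverse `φ_ψ`. -/
theorem h_bijOn (g ψ : ℝ) (hg : 0 < g) :
    let h : ℝ × ℝ × ℝ → ℝ × ℝ × ℝ := fun u =>
      (u.1 * (Real.cos u.2.1 * Real.sin u.2.2 * Real.cos ψ + Real.sin u.2.1 * Real.sin ψ),
       u.1 * (Real.cos u.2.1 * Real.sin u.2.2 * Real.sin ψ - Real.sin u.2.1 * Real.cos ψ),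
       u.1 * (Real.cos u.2.1 * Real.cos u.2.2) - g)
    let φmap : ℝ × ℝ × ℝ → ℝ × ℝ × ℝ := fun v =>
      (Real.sqrt (v.1 ^ 2 + v.2.1 ^ 2 + (v.2.2 + g) ^ 2),
       Real.arcsin ((v.1 * Real.sin ψ - v.2.1 * Real.cos ψ) /
         Real.sqrt (v.1 ^ 2 + v.2.1 ^ 2 + (v.2.2 + g) ^ 2)),
       Real.arctan ((v.1 * Real.cos ψ + v.2.1 * Real.sin ψ) / (v.2.2 + g)))
    let D : Set (ℝ × ℝ × ℝ) :=
      {u | 0 < u.1 ∧ |u.2.1| < Real.pi / 2 ∧ |u.2.2| < Real.pi / 2}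
    let E : Set (ℝ × ℝ × ℝ) := {v | v.2.2 + g > 0}
    Set.BijOn h D E ∧ Set.InvOn φmap h D E := by
  intro h φmap D E
  have hps : Real.sin ψ ^ 2 + Real.cos ψ ^ 2 = 1 := Real.sin_sq_add_cos_sq ψ
  -- h maps D to E
  have hmapsh : Set.MapsTo h D E := by
    rintro ⟨T, φ, θ⟩ ⟨hT, hφ, hθ⟩
    have hcφ : 0 < Real.cos φ := Real.cos_pos_of_mem_Ioo ⟨(abs_lt.mp hφ).1, (abs_lt.mp hφ).2⟩
    have hcθ : 0 < Real.cos θ := Real.cos_pos_of_mem_Ioo ⟨(abs_lt.mp hθ).1, (abs_lt.mp hθ).2⟩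
    show T * (Real.cos φ * Real.cos θ) - g + g > 0
    have : 0 < T * (Real.cos φ * Real.cos θ) := by positivity
    linarith
  -- left inverse: φmap (h u) = u on D
  have hleft : Set.LeftInvOn φmap h D := by
    rintro ⟨T, φ, θ⟩ ⟨hT, hφ, hθ⟩
    have hcφ : 0 < Real.cos φ := Real.cos_pos_of_mem_Ioo ⟨(abs_lt.mp hφ).1, (abs_lt.mp hφ).2⟩
    have hcθ : 0 < Real.cos θ := Real.cos_pos_of_mem_Ioo ⟨(abs_lt.mp hθ).1, (abs_lt.mp hθ).2⟩
    have p1 : Real.sin φ ^ 2 + Real.cos φ ^ 2 = 1 := Real.sin_sq_add_cos_sq φ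
    have p2 : Real.sin θ ^ 2 + Real.cos θ ^ 2 = 1 := Real.sin_sq_add_cos_sq θ
    set A := T * (Real.cos φ * Real.sin θ * Real.cos ψ + Real.sin φ * Real.sin ψ) with hA
    set B := T * (Real.cos φ * Real.sin θ * Real.sin ψ - Real.sin φ * Real.cos ψ) with hB
    have key : A ^ 2 + B ^ 2 + (T * (Real.cos φ * Real.cos θ) - g + g) ^ 2 = T ^ 2 := by
      rw [hA, hB]
      linear_combination (T ^ 2 * (Real.cos φ ^ 2 * Real.sin θ ^ 2 + Real.sin φ ^ 2)) * hps +
        (T ^ 2 * Real.cos φ ^ 2) * p2 + T ^ 2 * p1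
    have hsqrt : Real.sqrt (A ^ 2 + B ^ 2 + (T * (Real.cos φ * Real.cos θ) - g + g) ^ 2) = T := by
      rw [key, Real.sqrt_sq hT.le]
    show (_, _, _) = (T, φ, θ)
    refine Prod.ext ?_ (Prod.ext ?_ ?_)
    · exact hsqrt
    · show Real.arcsin ((A * Real.sin ψ - B * Real.cos ψ) /
        Real.sqrt (A ^ 2 + B ^ 2 + (T * (Real.cos φ * Real.cos θ) - g + g) ^ 2)) = φ
      rw [hsqrt]
      have hnum : A * Real.sin ψ - B * Real.cos ψ = T * Real.sin φ := by
        rw [hA, hB]; linear_combination (T * Real.sin φ) * hps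
      rw [hnum, mul_div_cancel_left₀ _ hT.ne']
      exact Real.arcsin_sin (by linarith [(abs_lt.mp hφ).1]) (by linarith [(abs_lt.mp hφ).2])
    · show Real.arctan ((A * Real.cos ψ + B * Real.sin ψ) /
        (T * (Real.cos φ * Real.cos θ) - g + g)) = θ
      have hnum : A * Real.cos ψ + B * Real.sin ψ = T * Real.cos φ * Real.sin θ := by
        rw [hA, hB]; linear_combination (T * Real.cos φ * Real.sin θ) * hps
      have hden : T * (Real.cos φ * Real.cos θ) - g + g = T * Real.cos φ * Real.cos θ := by ring
      rw [hnum, hden]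
      have : T * Real.cos φ * Real.sin θ / (T * Real.cos φ * Real.cos θ) = Real.tan θ := by
        rw [Real.tan_eq_sin_div_cos]
        field_simp
      rw [this]
      exact Real.arctan_tan (abs_lt.mp hθ).1 (abs_lt.mp hθ).2
  -- right inverse: h (φmap v) = v on E
  have hright : ∀ v ∈ E, h (φmap v) = v := by
    rintro ⟨v1, v2, v3⟩ hv
    have hw : (0:ℝ) < v3 + g := hv
    set s := v1 * Real.sin ψ - v2 * Real.cos ψ with hs
    set c := v1 * Real.cos ψ + v2 * Real.sin ψ with hc
    set w := v3 + g with hwdef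
    have hsc : v1 ^ 2 + v2 ^ 2 = s ^ 2 + c ^ 2 := by
      rw [hs, hc]; linear_combination (-(v1 ^ 2) - v2 ^ 2) * hps
    set T := Real.sqrt (v1 ^ 2 + v2 ^ 2 + w ^ 2) with hTdef
    have hqpos : 0 < v1 ^ 2 + v2 ^ 2 + w ^ 2 := by positivity
    have hT : 0 < T := Real.sqrt_pos.mpr hqpos
    have hT2 : T ^ 2 = v1 ^ 2 + v2 ^ 2 + w ^ 2 := Real.sq_sqrt hqpos.le
    set r := Real.sqrt (c ^ 2 + w ^ 2) with hrdef
    have hrpos : 0 < r := Real.sqrt_pos.mpr (by positivity)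
    have hr2 : r ^ 2 = c ^ 2 + w ^ 2 := Real.sq_sqrt (by positivity)
    have hs1 : |s / T| ≤ 1 := by
      rw [abs_div, abs_of_pos hT, div_le_one hT]
      have : |s| ^ 2 ≤ T ^ 2 := by rw [sq_abs, hT2, hsc]; nlinarith
      nlinarith [abs_nonneg s]
    have hsinφ : Real.sin (Real.arcsin (s / T)) = s / T :=
      Real.sin_arcsin (abs_le.mp hs1).1 (abs_le.mp hs1).2
    have hcosφ : Real.cos (Real.arcsin (s / T)) = r / T := by
      rw [Real.cos_arcsin]
      have h1 : 1 - (s / T) ^ 2 = (c ^ 2 + w ^ 2) / T ^ 2 := by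
        field_simp
        rw [hT2, hsc]; ring
      rw [h1, Real.sqrt_div (by positivity), Real.sqrt_sq hT.le, hrdef]
    have hsqrw : Real.sqrt (1 + (c / w) ^ 2) = r / w := by
      have h1 : 1 + (c / w) ^ 2 = (c ^ 2 + w ^ 2) / w ^ 2 := by field_simp; ring
      rw [h1, Real.sqrt_div (by positivity), Real.sqrt_sq hw.le, hrdef]
    have hsinθ : Real.sin (Real.arctan (c / w)) = c / r := by
      rw [Real.sin_arctan, hsqrw]
      field_simp
    have hcosθ : Real.cos (Real.arctan (c / w)) = w / r := by
      rw [Real.cos_arctan, hsqrw]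
      field_simp
    show (_, _, _) = (v1, v2, v3)
    refine Prod.ext ?_ (Prod.ext ?_ ?_)
    · show T * (Real.cos (Real.arcsin (s / T)) * Real.sin (Real.arctan (c / w)) * Real.cos ψ +
        Real.sin (Real.arcsin (s / T)) * Real.sin ψ) = v1
      rw [hcosφ, hsinφ, hsinθ]
      have : T * ((r / T) * (c / r) * Real.cos ψ + (s / T) * Real.sin ψ)
          = c * Real.cos ψ + s * Real.sin ψ := by
        field_simp
      rw [this, hs, hc]
      linear_combination v1 * hps
    · show T * (Real.cos (Real.arcsin (s / T)) * Real.sin (Real.arctan (c / w)) * Real.sin ψ -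
        Real.sin (Real.arcsin (s / T)) * Real.cos ψ) = v2
      rw [hcosφ, hsinφ, hsinθ]
      have : T * ((r / T) * (c / r) * Real.sin ψ - (s / T) * Real.cos ψ)
          = c * Real.sin ψ - s * Real.cos ψ := by
        field_simp
      rw [this, hs, hc]
      linear_combination v2 * hps
    · show T * (Real.cos (Real.arcsin (s / T)) * Real.cos (Real.arctan (c / w))) - g = v3
      rw [hcosφ, hcosθ]
      have : T * ((r / T) * (w / r)) = w := by field_simp
      rw [this, hwdef]
      ring
  -- φmap maps E to D
  have hmapsφ : Set.MapsTo φmap E D := by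
    rintro ⟨v1, v2, v3⟩ hv
    have hw : (0:ℝ) < v3 + g := hv
    set s := v1 * Real.sin ψ - v2 * Real.cos ψ with hs
    have hsc : v1 ^ 2 + v2 ^ 2 = s ^ 2 + (v1 * Real.cos ψ + v2 * Real.sin ψ) ^ 2 := by
      rw [hs]; linear_combination (-(v1 ^ 2) - v2 ^ 2) * hps
    set T := Real.sqrt (v1 ^ 2 + v2 ^ 2 + (v3 + g) ^ 2) with hTdef
    have hqpos : 0 < v1 ^ 2 + v2 ^ 2 + (v3 + g) ^ 2 := by positivity
    have hT : 0 < T := Real.sqrt_pos.mpr hqpos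
    have hT2 : T ^ 2 = v1 ^ 2 + v2 ^ 2 + (v3 + g) ^ 2 := Real.sq_sqrt hqpos.le
    show 0 < T ∧ |Real.arcsin (s / T)| < Real.pi / 2 ∧
      |Real.arctan ((v1 * Real.cos ψ + v2 * Real.sin ψ) / (v3 + g))| < Real.pi / 2
    refine ⟨hT, ?_, ?_⟩
    · show |Real.arcsin (s / T)| < Real.pi / 2
      have hlt : |s / T| < 1 := by
        rw [abs_div, abs_of_pos hT, div_lt_one hT]
        have h2 : |s| ^ 2 < T ^ 2 := by rw [sq_abs, hT2, hsc]; nlinarith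
        nlinarith [abs_nonneg s, hT]
      rw [abs_lt]
      constructor
      · exact Real.neg_pi_div_two_lt_arcsin.mpr (abs_lt.mp hlt).1
      · exact Real.arcsin_lt_pi_div_two.mpr (abs_lt.mp hlt).2
    · show |Real.arctan _| < Real.pi / 2
      rw [abs_lt]
      exact ⟨Real.neg_pi_div_two_lt_arctan _, Real.arctan_lt_pi_div_two _⟩
  have hinv : Set.InvOn φmap h D E := ⟨hleft, fun v hv => hright v hv⟩
  exact ⟨hinv.bijOn hmapsh hmapsφ, hinv⟩
end
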